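/- arXiv:math/9910019 — 3 statements merged into one kernel-verified Lean document; each statement's English description precedes it below -/
import Mathlib

section
/- The sum over all partitions λ of n of the square of the number of standard Young tableaux of shape λ equals n!. -/
/-- A standard Young tableau of shape μ: a bijective filling of the cells of μ
by 0,...,|μ|-1 that is strictly increasing along rows and columns
(equivalently, along the componentwise order). -/
def SYT (μ : YoungDiagram) : Type :=
  {f : μ.cells → Fin μ.card // Function.Bijective f ∧
    ∀ c₁ c₂ : μ.cells, c₁.1.1 ≤ c₂.1.1 → c₁.1.2 ≤ c₂.1.2 → c₁ ≠ c₂ →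
      f c₁ < f c₂}

/-!
Young's lattice is 1-differential: a diagram has one more upper cover than lower covers
(addable and removable corners alternate along the boundary, starting and ending with an
addable one), and two distinct diagrams `μ`, `ν` of equal size have as many common upper covers
as common lower covers (at most `μ ⊔ ν`, resp. `μ ⊓ ν`, and `|μ ⊔ ν| + |μ ⊓ ν| = |μ| + |ν|`).
Comparing up-then-down with down-then-up paths, induction on `|μ|` shows that every `f` with
`f μ = ∑_{ν ⋖ μ} f ν` satisfies `∑_{ρ ⋗ μ} f ρ = (|μ| + 1) f μ`, and then
`∑_{|μ| = n} f μ ^ 2 = n! f ∅ ^ 2`. The number of standard Young tableaux obeys this recursion,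
since erasing the largest entry of a tableau leaves a tableau of a lower cover.
-/

open Finset Function

namespace YoungDiagram

instance : DecidableEq YoungDiagram := fun _ _ => decidable_of_iff _ YoungDiagram.ext_iff.symm

variable {μ ν ρ : YoungDiagram} {n : ℕ}

lemma card_lt_card_of_lt (h : μ < ν) : μ.card < ν.card :=
  Finset.card_lt_card (cells_ssubset_iff.mpr h)

lemma eq_of_le_of_card_le (h : μ ≤ ν) (hc : ν.card ≤ μ.card) : μ = ν :=
  YoungDiagram.ext (eq_of_subset_of_card_le (cells_subset_iff.mpr h) hc)

lemma lt_of_le_of_card_lt (h : μ ≤ ν) (hc : μ.card < ν.card) : μ < ν :=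
  lt_of_le_of_ne h (by rintro rfl; omega)

lemma card_eq_zero_iff : μ.card = 0 ↔ μ = ⊥ :=
  ⟨fun h => YoungDiagram.ext (Finset.card_eq_zero.mp h), fun h => h ▸ rfl⟩

lemma card_sup_add_card_inf (μ ν : YoungDiagram) :
    (μ ⊔ ν).card + (μ ⊓ ν).card = μ.card + ν.card := by
  simp only [YoungDiagram.card, cells_sup, cells_inf, card_union_add_card_inter]

lemma cells_subset_range_product_range (μ : YoungDiagram) :
    μ.cells ⊆ range μ.card ×ˢ range μ.card := by
  rintro ⟨i, j⟩ hc
  rw [mem_cells] at hc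
  simp only [mem_product, mem_range]
  constructor
  · calc i < μ.colLen j := mem_iff_lt_colLen.mp hc
      _ = #(μ.col j) := μ.colLen_eq_card
      _ ≤ μ.card := Finset.card_le_card (filter_subset _ _)
  · calc j < μ.rowLen i := mem_iff_lt_rowLen.mp hc
      _ = #(μ.row i) := μ.rowLen_eq_card
      _ ≤ μ.card := Finset.card_le_card (filter_subset _ _)

lemma finite_setOf_card_eq (n : ℕ) : {μ : YoungDiagram | μ.card = n}.Finite := by
  refine (((range n ×ˢ range n).powerset.finite_toSet.preimage
    (fun μ _ ν _ h => YoungDiagram.ext h))).subset fun μ hμ => ?_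
  rw [Set.mem_preimage, coe_powerset, Set.mem_preimage, Set.mem_powerset_iff, coe_subset,
    ← show μ.card = n from hμ]
  exact cells_subset_range_product_range μ

noncomputable def withCard (n : ℕ) : Finset YoungDiagram := (finite_setOf_card_eq n).toFinset

@[simp] lemma mem_withCard : μ ∈ withCard n ↔ μ.card = n := Set.Finite.mem_toFinset _

lemma withCard_zero : withCard 0 = {⊥} := by
  ext μ
  rw [mem_withCard, card_eq_zero_iff, mem_singleton]

open scoped Classical in
noncomputable def lowerCovers (μ : YoungDiagram) : Finset YoungDiagram :=
  {ν ∈ withCard (μ.card - 1) | ν < μ}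

open scoped Classical in
noncomputable def upperCovers (μ : YoungDiagram) : Finset YoungDiagram :=
  {ρ ∈ withCard (μ.card + 1) | μ < ρ}

lemma mem_lowerCovers : ν ∈ lowerCovers μ ↔ ν < μ ∧ ν.card + 1 = μ.card := by
  classical
  rw [lowerCovers, mem_filter, mem_withCard]
  constructor
  · rintro ⟨h, hlt⟩
    have := card_lt_card_of_lt hlt
    exact ⟨hlt, by omega⟩
  · rintro ⟨hlt, h⟩
    exact ⟨by omega, hlt⟩

lemma mem_upperCovers : ρ ∈ upperCovers μ ↔ μ < ρ ∧ μ.card + 1 = ρ.card := by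
  classical
  rw [upperCovers, mem_filter, mem_withCard, eq_comm, and_comm]

lemma mem_upperCovers_iff_mem_lowerCovers : ρ ∈ upperCovers μ ↔ μ ∈ lowerCovers ρ := by
  rw [mem_upperCovers, mem_lowerCovers]

lemma ne_bot_of_mem_upperCovers (h : ρ ∈ upperCovers μ) : ρ ≠ ⊥ := by
  rw [Ne, ← card_eq_zero_iff]
  have := (mem_upperCovers.mp h).2
  omega

lemma exists_cells_eq_insert (h : ν ∈ lowerCovers μ) : ∃ c ∉ ν, μ.cells = insert c ν.cells := by
  obtain ⟨hlt, hcard⟩ := mem_lowerCovers.mp h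
  have hsub : ν.cells ⊆ μ.cells := cells_subset_iff.mpr hlt.le
  obtain ⟨c, hc⟩ : ∃ c, μ.cells \ ν.cells = {c} := by
    rw [← card_eq_one, card_sdiff_of_subset hsub, ← Nat.sub_eq_of_eq_add' hcard.symm]
  have hcν : c ∉ ν.cells := (mem_sdiff.mp (hc ▸ mem_singleton_self c)).2
  refine ⟨c, hcν, ?_⟩
  rw [insert_eq, ← hc, sdiff_union_of_subset hsub]

lemma eq_of_cells_eq_insert {c : ℕ × ℕ} (h : μ.cells = insert c ν.cells) {d : ℕ × ℕ}
    (hd : d ∈ μ) (hdν : d ∉ ν) : d = c := by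
  rw [← mem_cells, h, mem_insert] at hd
  exact hd.resolve_right hdν

lemma maximal_of_cells_eq_insert {c : ℕ × ℕ} (h : μ.cells = insert c ν.cells) (hc : c ∉ ν) :
    Maximal (· ∈ μ) c := by
  refine ⟨show c ∈ μ by rw [← mem_cells, h]; exact mem_insert_self c _, fun d hd hcd => ?_⟩
  exact (eq_of_cells_eq_insert h hd fun hdν => hc (ν.isLowerSet hcd hdν)).le

lemma minimal_of_cells_eq_insert {c : ℕ × ℕ} (h : μ.cells = insert c ν.cells) (hc : c ∉ ν) :
    Minimal (· ∉ ν) c := by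
  refine minimal_iff_forall_lt.mpr ⟨hc, fun d hdc hdν => hdc.ne ?_⟩
  exact eq_of_cells_eq_insert h (μ.isLowerSet hdc.le (maximal_of_cells_eq_insert h hc).1) hdν

def insertCell (μ : YoungDiagram) (c : ℕ × ℕ) (hc : Minimal (· ∉ μ) c) : YoungDiagram where
  cells := insert c μ.cells
  isLowerSet := by
    intro e d hde he
    simp only [coe_insert, Set.mem_insert_iff, mem_coe, mem_cells] at he ⊢
    rcases he with rfl | he
    · exact hde.eq_or_lt.imp id fun hlt => not_not.mp (hc.not_prop_of_lt hlt)
    · exact Or.inr (μ.isLowerSet hde he)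

def eraseCell (μ : YoungDiagram) (c : ℕ × ℕ) (hc : Maximal (· ∈ μ) c) : YoungDiagram where
  cells := μ.cells.erase c
  isLowerSet := by
    intro e d hde he
    simp only [coe_erase, Set.mem_sdiff, mem_coe, mem_cells, Set.mem_singleton_iff] at he ⊢
    refine ⟨μ.isLowerSet hde he.1, ?_⟩
    rintro rfl
    exact he.2 (hc.eq_of_ge he.1 hde)

lemma insertCell_mem_upperCovers {c : ℕ × ℕ} (hc : Minimal (· ∉ μ) c) :
    insertCell μ c hc ∈ upperCovers μ := by
  have hcard : μ.card + 1 = (insertCell μ c hc).card := (card_insert_of_notMem hc.1).symm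
  refine mem_upperCovers.mpr ⟨lt_of_le_of_card_lt ?_ (by omega), hcard⟩
  exact cells_subset_iff.mp (subset_insert c μ.cells)

lemma eraseCell_mem_lowerCovers {c : ℕ × ℕ} (hc : Maximal (· ∈ μ) c) :
    eraseCell μ c hc ∈ lowerCovers μ := by
  have hcard : (eraseCell μ c hc).card + 1 = μ.card := card_erase_add_one hc.1
  refine mem_lowerCovers.mpr ⟨lt_of_le_of_card_lt ?_ (by omega), hcard⟩
  exact cells_subset_iff.mp (erase_subset c μ.cells)

noncomputable def removableRows (μ : YoungDiagram) : Finset ℕ :=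
  {i ∈ range (μ.colLen 0) | μ.rowLen (i + 1) < μ.rowLen i}

-- A cell can be added at the end of row `i + 1` exactly when one can be removed from row `i`.
noncomputable def addableRows (μ : YoungDiagram) : Finset ℕ :=
  insert 0 ((removableRows μ).map (addRightEmbedding 1))

lemma mem_removableRows {i : ℕ} : i ∈ removableRows μ ↔ μ.rowLen (i + 1) < μ.rowLen i := by
  rw [removableRows, mem_filter, mem_range, ← mem_iff_lt_colLen, mem_iff_lt_rowLen]
  exact and_iff_right_of_imp fun h => by omega

lemma mem_addableRows {i : ℕ} : i ∈ addableRows μ ↔ i = 0 ∨ μ.rowLen i < μ.rowLen (i - 1) := by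
  cases i with
  | zero => simp [addableRows]
  | succ i => simp [addableRows, mem_removableRows]

lemma card_addableRows : #(addableRows μ) = #(removableRows μ) + 1 := by
  rw [addableRows, card_insert_of_notMem (by simp), card_map]

lemma maximal_of_mem_removableRows {i : ℕ} (hi : i ∈ removableRows μ) :
    Maximal (· ∈ μ) (i, μ.rowLen i - 1) := by
  rw [mem_removableRows] at hi
  refine ⟨mem_iff_lt_rowLen.mpr (by omega), fun ⟨a, b⟩ hd hcd => ?_⟩
  obtain ⟨ha, hb⟩ := Prod.mk_le_mk.mp hcd
  have hb' : b < μ.rowLen a := mem_iff_lt_rowLen.mp hd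
  have := μ.rowLen_anti i a ha
  have : a < i + 1 := by
    by_contra
    have := μ.rowLen_anti (i + 1) a (by omega)
    omega
  exact Prod.mk_le_mk.mpr ⟨by omega, by omega⟩

lemma minimal_of_mem_addableRows {i : ℕ} (hi : i ∈ addableRows μ) :
    Minimal (· ∉ μ) (i, μ.rowLen i) := by
  rw [mem_addableRows] at hi
  refine minimal_iff_forall_lt.mpr ⟨fun h => (mem_iff_lt_rowLen.mp h).false, ?_⟩
  rintro ⟨a, b⟩ hlt hab
  rw [mem_iff_lt_rowLen] at hab
  obtain ⟨ha, hb⟩ := Prod.mk_le_mk.mp hlt.le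
  have := μ.rowLen_anti a i ha
  obtain rfl : b = μ.rowLen i := by omega
  have : a < i := Prod.mk_lt_mk_iff_left.mp hlt
  have := μ.rowLen_anti a (i - 1) (by omega)
  omega

lemma mem_removableRows_of_maximal {c : ℕ × ℕ} (hc : Maximal (· ∈ μ) c) :
    c.1 ∈ removableRows μ ∧ c = (c.1, μ.rowLen c.1 - 1) := by
  obtain ⟨i, j⟩ := c
  dsimp only
  have hj : j < μ.rowLen i := mem_iff_lt_rowLen.mp hc.1
  have hright : ¬ j + 1 < μ.rowLen i := fun h =>
    (Prod.mk_lt_mk_iff_right.mpr j.lt_succ_self).not_ge (hc.2 (mem_iff_lt_rowLen.mpr h) (by simp))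
  have hdown : ¬ j < μ.rowLen (i + 1) := fun h =>
    (Prod.mk_lt_mk_iff_left.mpr i.lt_succ_self).not_ge (hc.2 (mem_iff_lt_rowLen.mpr h) (by simp))
  exact ⟨mem_removableRows.mpr (by omega), congrArg (Prod.mk i) (by omega)⟩

lemma mem_addableRows_of_minimal {c : ℕ × ℕ} (hc : Minimal (· ∉ μ) c) :
    c.1 ∈ addableRows μ ∧ c = (c.1, μ.rowLen c.1) := by
  obtain ⟨i, j⟩ := c
  dsimp only
  have hj : ¬ j < μ.rowLen i := fun h => hc.1 (mem_iff_lt_rowLen.mpr h)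
  have hleft : j ≠ 0 → j - 1 < μ.rowLen i := fun h => mem_iff_lt_rowLen.mp <| not_not.mp <|
    hc.not_prop_of_lt (show (i, j - 1) < (i, j) from Prod.mk_lt_mk_iff_right.mpr (Nat.sub_one_lt h))
  have hup : i ≠ 0 → j < μ.rowLen (i - 1) := fun h => mem_iff_lt_rowLen.mp <| not_not.mp <|
    hc.not_prop_of_lt (show (i - 1, j) < (i, j) from Prod.mk_lt_mk_iff_left.mpr (Nat.sub_one_lt h))
  refine ⟨mem_addableRows.mpr ?_, congrArg (Prod.mk i) (by omega)⟩
  by_cases hi : i = 0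
  · exact Or.inl hi
  · exact Or.inr (by have := hup hi; omega)

lemma card_lowerCovers : #(lowerCovers μ) = #(removableRows μ) := by
  refine (card_bij (fun i hi => eraseCell μ _ (maximal_of_mem_removableRows hi))
    (fun i hi => eraseCell_mem_lowerCovers _) (fun i hi i' hi' h => ?_) fun ν hν => ?_).symm
  · exact congrArg Prod.fst <| erase_injOn μ.cells (maximal_of_mem_removableRows hi).1
      (maximal_of_mem_removableRows hi').1 (congrArg cells h)
  · obtain ⟨c, hcν, hcells⟩ := exists_cells_eq_insert hν
    obtain ⟨hrow, hc⟩ := mem_removableRows_of_maximal (maximal_of_cells_eq_insert hcells hcν)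
    refine ⟨c.1, hrow, YoungDiagram.ext ?_⟩
    change μ.cells.erase _ = ν.cells
    rw [← hc, hcells, erase_insert hcν]

lemma card_upperCovers_eq_card_addableRows : #(upperCovers μ) = #(addableRows μ) := by
  refine (card_bij (fun i hi => insertCell μ _ (minimal_of_mem_addableRows hi))
    (fun i hi => insertCell_mem_upperCovers _) (fun i hi i' hi' h => ?_) fun ρ hρ => ?_).symm
  · exact congrArg Prod.fst <| (insert_inj (minimal_of_mem_addableRows hi).1).mp (congrArg cells h)
  · obtain ⟨c, hcμ, hcells⟩ := exists_cells_eq_insert (mem_upperCovers_iff_mem_lowerCovers.mp hρ)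
    obtain ⟨hrow, hc⟩ := mem_addableRows_of_minimal (minimal_of_cells_eq_insert hcells hcμ)
    refine ⟨c.1, hrow, YoungDiagram.ext ?_⟩
    change insert _ μ.cells = ρ.cells
    rw [← hc, hcells]

lemma card_upperCovers : #(upperCovers μ) = #(lowerCovers μ) + 1 := by
  rw [card_upperCovers_eq_card_addableRows, card_addableRows, card_lowerCovers]

lemma upperCovers_inter_upperCovers (hne : μ ≠ ν) (hcard : μ.card = ν.card) :
    upperCovers μ ∩ upperCovers ν = {ρ ∈ ({μ ⊔ ν} : Finset _) | μ.card + 1 = ρ.card} := by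
  ext ρ
  simp only [mem_inter, mem_filter, mem_singleton, mem_upperCovers]
  constructor
  · rintro ⟨⟨hμρ, hμ⟩, hνρ, -⟩
    have hlt : μ < μ ⊔ ν := lt_of_le_of_ne le_sup_left fun h =>
      hne (eq_of_le_of_card_le (h ▸ le_sup_right) hcard.le).symm
    have := card_lt_card_of_lt hlt
    exact ⟨(eq_of_le_of_card_le (sup_le hμρ.le hνρ.le) (by omega)).symm, hμ⟩
  · rintro ⟨rfl, h⟩
    exact ⟨⟨lt_of_le_of_card_lt le_sup_left (by omega), h⟩,
      lt_of_le_of_card_lt le_sup_right (by omega), by omega⟩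

lemma lowerCovers_inter_lowerCovers (hne : μ ≠ ν) (hcard : μ.card = ν.card) :
    lowerCovers μ ∩ lowerCovers ν = {σ ∈ ({μ ⊓ ν} : Finset _) | σ.card + 1 = μ.card} := by
  ext σ
  simp only [mem_inter, mem_filter, mem_singleton, mem_lowerCovers]
  constructor
  · rintro ⟨⟨hσμ, hμ⟩, hσν, -⟩
    have hlt : μ ⊓ ν < μ := lt_of_le_of_ne inf_le_left fun h =>
      hne (eq_of_le_of_card_le (h ▸ inf_le_right) hcard.ge)
    have := card_lt_card_of_lt hlt
    exact ⟨eq_of_le_of_card_le (le_inf hσμ.le hσν.le) (by omega), hμ⟩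
  · rintro ⟨rfl, h⟩
    exact ⟨⟨lt_of_le_of_card_lt inf_le_left (by omega), h⟩,
      lt_of_le_of_card_lt inf_le_right (by omega), by omega⟩

lemma card_upperCovers_inter_upperCovers (hcard : μ.card = ν.card) :
    #(upperCovers μ ∩ upperCovers ν) =
      #(lowerCovers μ ∩ lowerCovers ν) + if μ = ν then 1 else 0 := by
  obtain rfl | hne := eq_or_ne μ ν
  · rw [inter_self, inter_self, if_pos rfl, card_upperCovers]
  · rw [if_neg hne, add_zero, upperCovers_inter_upperCovers hne hcard,
      lowerCovers_inter_lowerCovers hne hcard, filter_singleton, filter_singleton]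
    have := card_sup_add_card_inf μ ν
    split_ifs <;> first | rfl | omega

lemma sum_upperCovers_sum_lowerCovers {M : Type*} [AddCommMonoid M] (g : YoungDiagram → M)
    (μ : YoungDiagram) : ∑ ρ ∈ upperCovers μ, ∑ σ ∈ lowerCovers ρ, g σ =
      ∑ σ ∈ withCard μ.card, #(upperCovers μ ∩ upperCovers σ) • g σ := by
  simp only [← sum_const]
  refine sum_comm' fun ρ σ => ?_
  simp only [mem_inter, mem_withCard, mem_upperCovers_iff_mem_lowerCovers, mem_lowerCovers]
  grind

lemma sum_lowerCovers_sum_upperCovers {M : Type*} [AddCommMonoid M] (g : YoungDiagram → M)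
    (μ : YoungDiagram) : ∑ τ ∈ lowerCovers μ, ∑ σ ∈ upperCovers τ, g σ =
      ∑ σ ∈ withCard μ.card, #(lowerCovers μ ∩ lowerCovers σ) • g σ := by
  simp only [← sum_const]
  refine sum_comm' fun τ σ => ?_
  simp only [mem_inter, mem_withCard, mem_upperCovers_iff_mem_lowerCovers, mem_lowerCovers]
  grind

section Differential

variable {R : Type*} [CommSemiring R] {f : YoungDiagram → R}

theorem sum_upperCovers_eq_mul (hf : ∀ μ, μ ≠ ⊥ → f μ = ∑ ν ∈ lowerCovers μ, f ν)
    (μ : YoungDiagram) : ∑ ρ ∈ upperCovers μ, f ρ = (μ.card + 1) * f μ := by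
  induction hn : μ.card using Nat.strong_induction_on generalizing μ with
  | _ n ih =>
    calc ∑ ρ ∈ upperCovers μ, f ρ = ∑ ρ ∈ upperCovers μ, ∑ σ ∈ lowerCovers ρ, f σ :=
          sum_congr rfl fun ρ hρ => hf ρ (ne_bot_of_mem_upperCovers hρ)
      _ = ∑ σ ∈ withCard n,
            (#(lowerCovers μ ∩ lowerCovers σ) • f σ + if μ = σ then f σ else 0) := by
          rw [sum_upperCovers_sum_lowerCovers, hn]
          refine sum_congr rfl fun σ hσ => ?_
          rw [card_upperCovers_inter_upperCovers (hn.trans (mem_withCard.mp hσ).symm)]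
          split_ifs <;> simp [add_smul]
      _ = ∑ τ ∈ lowerCovers μ, ∑ σ ∈ upperCovers τ, f σ + f μ := by
          rw [sum_add_distrib, sum_lowerCovers_sum_upperCovers, hn, sum_ite_eq,
            if_pos (mem_withCard.mpr hn)]
      _ = ∑ τ ∈ lowerCovers μ, n * f τ + f μ := by
          congr 1
          refine sum_congr rfl fun τ hτ => ?_
          have hτ := (mem_lowerCovers.mp hτ).2
          rw [ih τ.card (by omega) τ rfl]
          exact_mod_cast congrArg (fun k : ℕ => (k : R) * f τ) (hτ.trans hn)
      _ = (n + 1) * f μ := by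
          rw [← mul_sum, add_mul, one_mul]
          rcases eq_or_ne n 0 with rfl | hn0
          · simp
          · rw [← hf μ (card_eq_zero_iff.not.mp (hn ▸ hn0))]

theorem sum_sq_eq_factorial_mul (hf : ∀ μ, μ ≠ ⊥ → f μ = ∑ ν ∈ lowerCovers μ, f ν) (n : ℕ) :
    ∑ μ ∈ withCard n, f μ ^ 2 = n.factorial * f ⊥ ^ 2 := by
  induction n with
  | zero => simp [withCard_zero]
  | succ n ih =>
    calc ∑ μ ∈ withCard (n + 1), f μ ^ 2
        = ∑ μ ∈ withCard (n + 1), ∑ ν ∈ lowerCovers μ, f μ * f ν :=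
          sum_congr rfl fun μ hμ => by
            have hμ : μ ≠ ⊥ := card_eq_zero_iff.not.mp (mem_withCard.mp hμ ▸ n.succ_ne_zero)
            rw [← mul_sum, ← hf μ hμ, sq]
      _ = ∑ ν ∈ withCard n, ∑ μ ∈ upperCovers ν, f μ * f ν := by
          refine sum_comm' fun μ ν => ?_
          simp only [mem_withCard, mem_upperCovers_iff_mem_lowerCovers, mem_lowerCovers]
          grind
      _ = ∑ ν ∈ withCard n, (n + 1) * f ν ^ 2 := sum_congr rfl fun ν hν => by
          rw [← sum_mul, sum_upperCovers_eq_mul hf, mem_withCard.mp hν, sq, mul_assoc]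
      _ = (n + 1).factorial * f ⊥ ^ 2 := by
          rw [← mul_sum, ih, Nat.factorial_succ]
          push_cast
          ring

end Differential

end YoungDiagram

namespace SYT

open YoungDiagram

variable {μ ν : YoungDiagram}

instance : Finite (SYT μ) := by
  unfold SYT
  infer_instance

lemma lt_card (T : SYT μ) (d : μ.cells) : (T.1 d : ℕ) < μ.card := (T.1 d).2

lemma injective (T : SYT μ) : Injective fun d => (T.1 d : ℕ) :=
  Fin.val_injective.comp T.2.1.1

lemma strictMono (T : SYT μ) : StrictMono fun d => (T.1 d : ℕ) := fun _ _ h =>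
  T.2.2 _ _ h.le.1 h.le.2 h.ne

def mk' (f : μ.cells → ℕ) (hlt : ∀ d, f d < μ.card) (hinj : Injective f) (hmono : StrictMono f) :
    SYT μ :=
  ⟨fun d => ⟨f d, hlt d⟩,
    (Fintype.bijective_iff_injective_and_card _).mpr
      ⟨fun _ _ h => hinj (congrArg Fin.val h), by simp⟩,
    fun _ _ h₁ h₂ hne => hmono (lt_of_le_of_ne ⟨h₁, h₂⟩ hne)⟩

lemma card_bot : Nat.card (SYT ⊥) = 1 := by
  have : IsEmpty (⊥ : YoungDiagram).cells := ⟨fun d => notMem_bot d.1 d.2⟩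
  have : IsEmpty (Fin (⊥ : YoungDiagram).card) := Fin.isEmpty'
  exact Nat.card_eq_one_iff_unique.mpr
    ⟨⟨fun _ _ => Subtype.ext (Subsingleton.elim _ _)⟩,
      ⟨⟨isEmptyElim, ⟨fun d => isEmptyElim d, fun b => isEmptyElim b⟩, fun d => isEmptyElim d⟩⟩⟩

lemma lt_of_ne_of_apply_eq {T : SYT μ} {c : μ.cells} (hc : (T.1 c : ℕ) + 1 = μ.card) {d : μ.cells}
    (hd : d ≠ c) : (T.1 d : ℕ) + 1 < μ.card :=
  lt_of_le_of_ne (T.lt_card d) fun h => hd (T.injective (show (T.1 d : ℕ) = T.1 c by omega))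

lemma maximal_of_apply_eq {T : SYT μ} {c : μ.cells} (hc : (T.1 c : ℕ) + 1 = μ.card) :
    Maximal (· ∈ μ) c.1 := by
  refine ⟨c.2, fun d hd hcd => ?_⟩
  by_contra hdc
  have hlt : c < ⟨d, hd⟩ := lt_of_le_of_ne hcd fun h => hdc (h ▸ le_rfl)
  have : (T.1 c : ℕ) < T.1 ⟨d, hd⟩ := T.strictMono hlt
  have := lt_of_ne_of_apply_eq hc hlt.ne'
  omega

def restrict (T : SYT μ) (h : ν ≤ μ)
    (hlt : ∀ d : ν.cells, (T.1 ⟨d, cells_subset_iff.mpr h d.2⟩ : ℕ) < ν.card) : SYT ν :=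
  mk' _ hlt (fun _ _ hde => Subtype.ext <| by simpa using T.injective hde)
    fun _ _ hde => T.strictMono hde

def extendFun (T : SYT ν) (d : μ.cells) : ℕ := if h : d.1 ∈ ν then T.1 ⟨d.1, h⟩ else ν.card

section Extend

variable (hν : ν ∈ lowerCovers μ) (T : SYT ν)
include hν

lemma extendFun_lt (d : μ.cells) : extendFun T d < μ.card := by
  have := (mem_lowerCovers.mp hν).2
  unfold extendFun
  split_ifs
  · have := T.lt_card ⟨d.1, ‹_›⟩
    omega
  · omega

lemma extendFun_injective : Injective (extendFun (μ := μ) T) := by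
  obtain ⟨c, hcν, hcells⟩ := exists_cells_eq_insert hν
  intro d₁ d₂ h
  unfold extendFun at h
  split_ifs at h with h₁ h₂ h₂
  · exact Subtype.ext <| by simpa using T.injective h
  · exact absurd h (T.lt_card _).ne
  · exact absurd h.symm (T.lt_card _).ne
  · exact Subtype.ext ((eq_of_cells_eq_insert hcells d₁.2 h₁).trans
      (eq_of_cells_eq_insert hcells d₂.2 h₂).symm)

lemma extendFun_strictMono : StrictMono (extendFun (μ := μ) T) := by
  obtain ⟨c, hcν, hcells⟩ := exists_cells_eq_insert hν
  intro d₁ d₂ h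
  unfold extendFun
  split_ifs with h₁ h₂ h₂
  · exact T.strictMono (show (⟨d₁.1, h₁⟩ : ν.cells) < ⟨d₂.1, h₂⟩ from h)
  · exact T.lt_card _
  · exfalso
    obtain rfl := eq_of_cells_eq_insert hcells d₁.2 h₁
    exact h.not_ge ((maximal_of_cells_eq_insert hcells hcν).2 d₂.2 h.le)
  · exact absurd ((eq_of_cells_eq_insert hcells d₁.2 h₁).trans
      (eq_of_cells_eq_insert hcells d₂.2 h₂).symm) (Subtype.coe_injective.ne h.ne)

def extend : SYT μ :=
  mk' (extendFun T) (extendFun_lt hν T) (extendFun_injective hν T) (extendFun_strictMono hν T)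

lemma mem_iff_extend_lt (d : μ.cells) : d.1 ∈ ν ↔ ((extend hν T).1 d : ℕ) < ν.card := by
  change _ ↔ extendFun T d < ν.card
  unfold extendFun
  split_ifs with hd
  · exact iff_of_true hd (T.lt_card _)
  · exact iff_of_false hd (lt_irrefl _)

lemma extend_apply_of_mem (d : ν.cells) :
    ((extend hν T).1 ⟨d, cells_subset_iff.mpr (mem_lowerCovers.mp hν).1.le d.2⟩ : ℕ) = T.1 d :=
  dif_pos d.2

end Extend

lemma extend_injective : Injective fun x : Σ ν : lowerCovers μ, SYT ν.1 => extend x.1.2 x.2 := by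
  rintro ⟨⟨ν, hν⟩, T⟩ ⟨⟨ν', hν'⟩, T'⟩ h
  dsimp only at h
  have hcard : ν.card = ν'.card := by
    have := (mem_lowerCovers.mp hν).2
    have := (mem_lowerCovers.mp hν').2
    omega
  obtain rfl : ν = ν' := SetLike.ext fun d => by
    by_cases hd : d ∈ μ
    · rw [mem_iff_extend_lt hν T ⟨d, hd⟩, mem_iff_extend_lt hν' T' ⟨d, hd⟩, hcard, h]
    · exact iff_of_false (fun h' => hd ((mem_lowerCovers.mp hν).1.le h'))
        (fun h' => hd ((mem_lowerCovers.mp hν').1.le h'))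
  obtain rfl : T = T' := Subtype.ext <| funext fun d => Fin.ext <| by
    rw [← extend_apply_of_mem hν T d, ← extend_apply_of_mem hν' T' d, h]
  rfl

lemma extend_surjective (hμ : μ ≠ ⊥) :
    Surjective fun x : Σ ν : lowerCovers μ, SYT ν.1 => extend x.1.2 x.2 := by
  intro S
  have hpos : μ.card ≠ 0 := card_eq_zero_iff.not.mpr hμ
  obtain ⟨c, hc⟩ := S.2.1.2 ⟨μ.card - 1, by omega⟩
  have hcval : (S.1 c : ℕ) + 1 = μ.card := by rw [hc, Fin.val_mk]; omega
  have hmax := maximal_of_apply_eq hcval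
  have hν := eraseCell_mem_lowerCovers hmax
  have hνcard := (mem_lowerCovers.mp hν).2
  have hle := (mem_lowerCovers.mp hν).1.le
  refine ⟨⟨⟨_, hν⟩, S.restrict hle fun d => ?_⟩, ?_⟩
  · have := lt_of_ne_of_apply_eq hcval (d := ⟨d.1, cells_subset_iff.mpr hle d.2⟩)
      fun h => (mem_erase.mp d.2).1 (Subtype.ext_iff.mp h)
    dsimp only
    omega
  · refine Subtype.ext <| funext fun d => Fin.ext ?_
    change extendFun _ d = _
    unfold extendFun
    split_ifs with hd
    · rfl
    · obtain rfl : d = c := Subtype.ext (by_contra fun h => hd (mem_erase.mpr ⟨h, d.2⟩))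
      dsimp only
      omega

theorem card_eq_sum_lowerCovers (hμ : μ ≠ ⊥) :
    Nat.card (SYT μ) = ∑ ν ∈ lowerCovers μ, Nat.card (SYT ν) := by
  rw [← Nat.card_congr (Equiv.ofBijective _ ⟨extend_injective, extend_surjective hμ⟩),
    Nat.card_sigma, sum_coe_sort (lowerCovers μ) fun ν => Nat.card (SYT ν)]

end SYT

/-- Σ_{λ ⊢ n} d_λ² = n!. -/
theorem stmt5 (n : ℕ) :
    Nat.card ((μ : {μ : YoungDiagram // μ.card = n}) × (SYT μ.1 × SYT μ.1))
      = n.factorial := by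
  have : Fintype {μ : YoungDiagram // μ.card = n} := (YoungDiagram.finite_setOf_card_eq n).fintype
  simp only [Nat.card_sigma, Nat.card_prod, ← sq]
  rw [← sum_subtype _ (fun _ => YoungDiagram.mem_withCard) (fun μ => Nat.card (SYT μ) ^ 2),
    YoungDiagram.sum_sq_eq_factorial_mul (fun _ => SYT.card_eq_sum_lowerCovers), SYT.card_bot,
    one_pow, mul_one, Nat.cast_id]
end

section
/- For every permutation π ∈ S_n, the length of the longest increasing subsequence of π equals the length λ_1 of the first row of the common shape of the pair of standard Young tableaux associated to π by the Robinson–Schensted correspondence. -/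
/-- Schensted row insertion: insert x into a row, returning the new row and
the bumped entry (if any). -/
def rowInsert (x : ℕ) : List ℕ → List ℕ × Option ℕ
  | [] => ([x], none)
  | a :: r =>
      if x < a then (x :: r, some a)
      else
        let p := rowInsert x r
        (a :: p.1, p.2)

/-- Insert an entry into a tableau (list of rows), bumping recursively. -/
def insertTableau (x : ℕ) : List (List ℕ) → List (List ℕ)
  | [] => [[x]]
  | row :: rest =>
      match rowInsert x row with
      | (row', none) => row' :: rest
      | (row', some b) => row' :: insertTableau b rest

/-- The Robinson–Schensted insertion tableau of a word. -/
def RSTableau (wd : List ℕ) : List (List ℕ) :=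
  wd.foldl (fun T x => insertTableau x T) []


def stepR (r : List ℕ) (x : ℕ) : List ℕ := (rowInsert x r).1

def Rrow (w : List ℕ) : List ℕ := w.foldl stepR []

lemma stepR_nil (x : ℕ) : stepR [] x = [x] := rfl
lemma stepR_cons_lt {x a : ℕ} (t : List ℕ) (h : x < a) : stepR (a::t) x = x :: t := by
  simp [stepR, rowInsert, h]
lemma stepR_cons_ge {x a : ℕ} (t : List ℕ) (h : ¬ x < a) : stepR (a::t) x = a :: stepR t x := by
  simp [stepR, rowInsert, h]

lemma headD_insertTableau (x : ℕ) (T : List (List ℕ)) :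
    (insertTableau x T).headD [] = stepR (T.headD []) x := by
  cases T with
  | nil => rfl
  | cons row rest =>
    show (insertTableau x (row :: rest)).headD [] = stepR row x
    rw [insertTableau]
    rcases h : rowInsert x row with ⟨row', b⟩
    cases b <;> simp [stepR, h]

lemma headD_foldl (w : List ℕ) : ∀ T : List (List ℕ),
    ((w.foldl (fun T x => insertTableau x T) T).headD []) = w.foldl stepR (T.headD []) := by
  induction w with
  | nil => intro T; rfl
  | cons a w ih =>
    intro T
    simp only [List.foldl_cons]
    rw [ih, headD_insertTableau]

lemma headD_RSTableau (w : List ℕ) : (RSTableau w).headD [] = Rrow w :=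
  headD_foldl w []

lemma Rrow_append (w : List ℕ) (x : ℕ) : Rrow (w ++ [x]) = stepR (Rrow w) x := by
  simp [Rrow, List.foldl_append]

lemma mem_stepR {y : ℕ} (r : List ℕ) (x : ℕ) (h : y ∈ stepR r x) : y = x ∨ y ∈ r := by
  induction r with
  | nil => simp [stepR_nil] at h; exact Or.inl h
  | cons a t ih =>
    by_cases hx : x < a
    · rw [stepR_cons_lt t hx] at h
      rcases List.mem_cons.1 h with h | h
      · exact Or.inl h
      · exact Or.inr (List.mem_cons.2 (Or.inr h))
    · rw [stepR_cons_ge t hx] at h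
      rcases List.mem_cons.1 h with h | h
      · exact Or.inr (by simp [h])
      · rcases ih h with h | h
        · exact Or.inl h
        · exact Or.inr (by simp [h])

lemma stepR_sorted {r : List ℕ} (x : ℕ) (h : r.Pairwise (· ≤ ·)) :
    (stepR r x).Pairwise (· ≤ ·) := by
  induction r with
  | nil => simp [stepR_nil]
  | cons a t ih =>
    rw [List.pairwise_cons] at h
    by_cases hx : x < a
    · rw [stepR_cons_lt t hx]
      exact List.pairwise_cons.2 ⟨fun b hb => le_of_lt (lt_of_lt_of_le hx (h.1 b hb)), h.2⟩
    · rw [stepR_cons_ge t hx]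
      refine List.pairwise_cons.2 ⟨?_, ih h.2⟩
      intro b hb
      rcases mem_stepR t x hb with rfl | hb
      · exact le_of_not_gt hx
      · exact h.1 b hb

lemma stepR_ne_nil (r : List ℕ) (x : ℕ) : stepR r x ≠ [] := by
  cases r with
  | nil => simp [stepR_nil]
  | cons a t =>
    by_cases hx : x < a
    · simp [stepR_cons_lt t hx]
    · simp [stepR_cons_ge t hx]

lemma stepR_length_pos (r : List ℕ) (x : ℕ) : 0 < (stepR r x).length :=
  List.length_pos_iff.2 (stepR_ne_nil r x)

lemma stepR_head_le (r : List ℕ) (x : ℕ) :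
    (stepR r x)[0]'(stepR_length_pos r x) ≤ x := by
  cases r with
  | nil => simp [stepR_nil]
  | cons a t =>
    by_cases hx : x < a
    · simp [stepR_cons_lt t hx]
    · simp [stepR_cons_ge t hx, le_of_not_gt hx]

lemma stepR_length_ge (r : List ℕ) (x : ℕ) : r.length ≤ (stepR r x).length := by
  induction r with
  | nil => simp [stepR_nil]
  | cons a t ih =>
    by_cases hx : x < a
    · simp [stepR_cons_lt t hx]
    · simp [stepR_cons_ge t hx]; omega

lemma stepR_pointwise (r : List ℕ) (x : ℕ) :
    ∀ i (hi : i < r.length) (hi' : i < (stepR r x).length),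
      (stepR r x)[i] ≤ r[i] := by
  induction r with
  | nil => intro i hi; simp at hi
  | cons a t ih =>
    intro i hi hi'
    by_cases hx : x < a
    · simp only [stepR_cons_lt t hx] at hi' ⊢
      cases i with
      | zero => simpa using le_of_lt hx
      | succ j => simp
    · simp only [stepR_cons_ge t hx] at hi' ⊢
      cases i with
      | zero => simp
      | succ j =>
        simp only [List.getElem_cons_succ]
        exact ih j (by simpa using hi) (by simpa using hi')

lemma stepR_next_le {r : List ℕ} (hs : r.Pairwise (· ≤ ·)) (x : ℕ) :
    ∀ i (hi : i < r.length), r[i] ≤ x →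
      ∃ h : i + 1 < (stepR r x).length, (stepR r x)[i+1] ≤ x := by
  induction r with
  | nil => intro i hi; simp at hi
  | cons a t ih =>
    rw [List.pairwise_cons] at hs
    intro i hi hle
    by_cases hx : x < a
    · exfalso
      have : a ≤ (a::t)[i] := by
        cases i with
        | zero => simp
        | succ j => simpa using hs.1 _ (List.getElem_mem _)
      omega
    · simp only [stepR_cons_ge t hx]
      cases i with
      | zero =>
        exact ⟨by simpa using stepR_length_pos t x, by simpa using stepR_head_le t x⟩
      | succ j =>
        obtain ⟨h1, h2⟩ := ih hs.2 j (by simpa using hi) (by simpa using hle)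
        exact ⟨by simpa using h1, by simpa using h2⟩

lemma stepR_decomp (r : List ℕ) (x : ℕ) :
    ∃ j, j ≤ r.length ∧ stepR r x = r.take j ++ x :: r.drop (j+1) ∧
      ∀ m (hm : m < r.length), m < j → r[m] ≤ x := by
  induction r with
  | nil => exact ⟨0, by simp [stepR_nil]⟩
  | cons a t ih =>
    by_cases hx : x < a
    · refine ⟨0, by simp, ?_, by omega⟩
      simp [stepR_cons_lt t hx]
    · obtain ⟨j, hj, he, hm⟩ := ih
      refine ⟨j+1, by simpa using hj, ?_, ?_⟩
      · rw [stepR_cons_ge t hx, he]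
        simp
      · intro m hm' hmj
        cases m with
        | zero => simpa using le_of_not_gt hx
        | succ m => exact hm m (by simpa using hm') (by omega)

lemma decomp_length {r : List ℕ} {x : ℕ} {j : ℕ} (hj : j ≤ r.length)
    (he : stepR r x = r.take j ++ x :: r.drop (j+1)) :
    (stepR r x).length = max r.length (j+1) := by
  rw [he]
  simp only [List.length_append, List.length_take, List.length_cons, List.length_drop]
  omega

lemma decomp_get_lt {r : List ℕ} {x : ℕ} {j : ℕ} (hj : j ≤ r.length)
    (he : stepR r x = r.take j ++ x :: r.drop (j+1)) {i : ℕ} (hij : i < j)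
    (hi' : i < (stepR r x).length) :
    (stepR r x)[i] = r[i]'(by omega) := by
  have hti : i < (r.take j).length := by simp; omega
  rw [List.getElem_of_eq he hi', List.getElem_append_left hti, List.getElem_take]

lemma decomp_get_eq {r : List ℕ} {x : ℕ} {j : ℕ} (hj : j ≤ r.length)
    (he : stepR r x = r.take j ++ x :: r.drop (j+1)) (hi' : j < (stepR r x).length) :
    (stepR r x)[j] = x := by
  have htl : (r.take j).length = j := by simp; omega
  have : (r.take j).length ≤ j := by omega
  rw [List.getElem_of_eq he hi', List.getElem_append_right this]
  simp [htl]

lemma decomp_get_gt {r : List ℕ} {x : ℕ} {j : ℕ} (hj : j ≤ r.length)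
    (he : stepR r x = r.take j ++ x :: r.drop (j+1)) {i : ℕ} (hij : j < i)
    (hi' : i < (stepR r x).length) :
    (stepR r x)[i] = r[i]'(by have := decomp_length hj he; omega) := by
  have htl : (r.take j).length = j := by simp; omega
  have h1 : (r.take j).length ≤ i := by omega
  rw [List.getElem_of_eq he hi', List.getElem_append_right h1]
  have h2 : i - (r.take j).length = (i - j - 1) + 1 := by omega
  simp only [h2, List.getElem_cons_succ, List.getElem_drop]
  congr 1
  omega

lemma sorted_le_getLast {l : List ℕ} (h : l.Pairwise (· ≤ ·)) (hne : l ≠ []) {a : ℕ}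
    (ha : a ∈ l) : a ≤ l.getLast hne := by
  obtain ⟨i, hi, rfl⟩ := List.mem_iff_getElem.1 ha
  rw [List.getLast_eq_getElem]
  rcases Nat.lt_or_ge i (l.length - 1) with h' | h'
  · exact List.pairwise_iff_getElem.1 h i _ hi (by omega) h'
  · have : i = l.length - 1 := by have := hi; omega
    subst this
    exact le_refl _

lemma exists_idx_le {L : List ℕ} {x i k : ℕ} (hik : i = k)
    (H : ∃ h : k < L.length, L[k] ≤ x) : ∃ h : i < L.length, L[i] ≤ x := by
  subst hik; exact H

lemma main_inv (w : List ℕ) :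
    (Rrow w).Pairwise (· ≤ ·) ∧
    (∀ i (hi : i < (Rrow w).length), ∃ l : List ℕ, l.Sublist w ∧ l.Pairwise (· ≤ ·) ∧
        l.length = i + 1 ∧ l.getLast? = some ((Rrow w)[i])) ∧
    (∀ l, l.Sublist w → l.Pairwise (· ≤ ·) → ∀ (h : l ≠ []),
        ∃ hl : l.length - 1 < (Rrow w).length, (Rrow w)[l.length - 1] ≤ l.getLast h) := by
  induction w using List.reverseRecOn with
  | nil =>
    refine ⟨by simp [Rrow], ?_, ?_⟩
    · intro i hi; simp [Rrow] at hi
    · intro l hl _ h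
      rw [List.sublist_nil] at hl
      exact absurd hl h
  | append_singleton w x ih =>
    obtain ⟨hsort, hA, hB⟩ := ih
    have hR : Rrow (w ++ [x]) = stepR (Rrow w) x := Rrow_append w x
    set r := Rrow w with hr
    obtain ⟨j, hj, he, hlo⟩ := stepR_decomp r x
    have hlen := decomp_length hj he
    refine ⟨?_, ?_, ?_⟩
    · rw [hR]; exact stepR_sorted x hsort
    · -- witnesses
      rw [hR]
      intro i hi
      rcases Nat.lt_trichotomy i j with hij | heq | hij
      · have hir : i < r.length := by omega
        obtain ⟨l, hsub, hso, hle, hla⟩ := hA i hir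
        refine ⟨l, hsub.trans (List.sublist_append_left w [x]), hso, hle, ?_⟩
        rw [decomp_get_lt hj he hij hi]
        exact hla
      · -- i = j
        subst heq
        rcases Nat.eq_zero_or_pos i with hi0 | hjpos
        · subst hi0
          refine ⟨[x], ?_, by simp, by simp, ?_⟩
          · simpa using (List.nil_sublist w).append (List.Sublist.refl [x])
          · rw [decomp_get_eq hj he hi]; rfl
        · have hjr : i - 1 < r.length := by omega
          obtain ⟨l, hsub, hso, hle, hla⟩ := hA (i-1) hjr
          have hlne : l ≠ [] := by
            intro h; rw [h] at hle; simp at hle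
          have hlast : l.getLast hlne = r[i-1] := by
            have := List.getLast_eq_iff_getLast?_eq_some hlne |>.2 hla
            exact this
          refine ⟨l ++ [x], hsub.append (List.Sublist.refl [x]), ?_, ?_, ?_⟩
          · rw [List.pairwise_append]
            refine ⟨hso, by simp, ?_⟩
            intro a ha b hb
            rw [List.mem_singleton] at hb
            rw [hb]
            calc a ≤ l.getLast hlne := sorted_le_getLast hso hlne ha
              _ = r[i-1] := hlast
              _ ≤ x := hlo (i-1) hjr (by omega)
          · simp [hle]; omega
          · rw [decomp_get_eq hj he hi]
            simp
      · have hir : i < r.length := by omega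
        obtain ⟨l, hsub, hso, hle, hla⟩ := hA i hir
        refine ⟨l, hsub.trans (List.sublist_append_left w [x]), hso, hle, ?_⟩
        rw [decomp_get_gt hj he hij hi]
        exact hla
    · -- bound
      rw [hR]
      intro l hl hso hne
      rw [List.sublist_append_iff] at hl
      obtain ⟨l₁, l₂, rfl, h1, h2⟩ := hl
      have hx2 : l₂ = [] ∨ l₂ = [x] := by
        cases h2 with
        | cons _ h => left; simpa using h
        | cons_cons _ h => right; simpa using h
      have hge := stepR_length_ge r x
      rcases hx2 with rfl | rfl
      · obtain ⟨hl1, hle1⟩ := hB (l₁ ++ []) (by simpa using h1) hso hne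
        exact ⟨by omega, le_trans (stepR_pointwise r x _ hl1 (by omega)) hle1⟩
      · have hlast : (l₁ ++ [x]).getLast hne = x := by
          simp [List.getLast_append]
        rw [hlast]
        have hlen1 : (l₁ ++ [x]).length - 1 = l₁.length := by simp
        rcases List.eq_nil_or_concat l₁ with rfl | _
        · refine ⟨by simpa using stepR_length_pos r x, ?_⟩
          simpa using stepR_head_le r x
        · have hne1 : l₁ ≠ [] := by rename_i h'; obtain ⟨_, _, rfl⟩ := h'; simp
          rw [List.pairwise_append] at hso
          obtain ⟨hso1, _, hrel⟩ := hso
          obtain ⟨hl1, hle1⟩ := hB l₁ h1 hso1 hne1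
          have hlast1 : l₁.getLast hne1 ≤ x :=
            hrel _ (List.getLast_mem hne1) x (by simp)
          have hkey : r[l₁.length - 1] ≤ x := le_trans hle1 hlast1
          have hll : l₁.length = l₁.length - 1 + 1 := by
            have : 0 < l₁.length := List.length_pos_iff.2 hne1
            omega
          exact exists_idx_le hlen1
            (exists_idx_le hll (stepR_next_le hsort x (l₁.length - 1) hl1 hkey))

/-- Length of the longest increasing subsequence of π. -/
noncomputable def lisLen (n : ℕ) (π : Equiv.Perm (Fin n)) : ℕ :=
  sSup {k | ∃ s : Fin k → Fin n, StrictMono s ∧ StrictMono (fun i => π (s i))}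


/-- Schensted: the longest increasing subsequence length of π
equals the length λ₁ of the first row of the Robinson–Schensted shape of π. -/
theorem stmt15 (n : ℕ) (π : Equiv.Perm (Fin n)) :
    lisLen n π
      = ((RSTableau (List.ofFn fun i => (π i : ℕ))).headD []).length := by
  classical
  have hwl : (List.ofFn fun i => (π i : ℕ)).length = n := by simp
  rw [headD_RSTableau]
  set w : List ℕ := List.ofFn (fun i => (π i : ℕ)) with hw
  set L := (Rrow w).length with hL
  obtain ⟨hsort, hA, hB⟩ := main_inv w
  set S := {k | ∃ s : Fin k → Fin n, StrictMono s ∧ StrictMono (fun i => π (s i))} with hS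
  have hmem0 : (0 : ℕ) ∈ S :=
    ⟨Fin.elim0, by intro a b h; exact a.elim0, by intro a b h; exact a.elim0⟩
  have hub : ∀ k ∈ S, k ≤ L := by
    rintro k ⟨s, hs, hπs⟩
    rcases Nat.eq_zero_or_pos k with rfl | hk
    · exact Nat.zero_le _
    set l : List ℕ := List.ofFn (fun i : Fin k => (π (s i) : ℕ)) with hl
    have hll : l.length = k := by simp [hl]
    have hsub : l.Sublist w := by
      rw [List.sublist_iff_exists_fin_orderEmbedding_get_eq]
      refine ⟨OrderEmbedding.ofStrictMono
        (fun ix => Fin.cast hwl.symm (s (Fin.cast hll ix))) ?_, ?_⟩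
      · intro a b hab
        exact hs hab
      · intro ix
        show (List.ofFn (fun i : Fin k => (π (s i) : ℕ))).get (Fin.cast hll.symm (Fin.cast hll ix))
            = (List.ofFn (fun i => (π i : ℕ))).get
                (Fin.cast hwl.symm (s (Fin.cast hll ix)))
        rw [List.get_ofFn, List.get_ofFn]
        rfl
    have hso : l.Pairwise (· ≤ ·) := by
      rw [hl, List.pairwise_ofFn]
      intro i j hij
      exact le_of_lt (hπs hij)
    have hne : l ≠ [] := by
      intro h; rw [h] at hll; simp at hll; omega
    obtain ⟨h1, -⟩ := hB l hsub hso hne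
    rw [hll] at h1
    omega
  have hmem : L ∈ S := by
    rcases Nat.eq_zero_or_pos L with h0 | hLpos
    · rw [h0]; exact hmem0
    obtain ⟨l, hsub, hso, hlen, hlast⟩ := hA (L-1) (by omega)
    have hll : l.length = L := by omega
    have hnodup : l.Nodup := by
      refine hsub.nodup ?_
      rw [hw]
      exact List.nodup_ofFn.2 (fun a b hab => π.injective (Fin.val_injective hab))
    have hlt : l.Pairwise (· < ·) :=
      (hso.and hnodup).imp (fun h => lt_of_le_of_ne h.1 h.2)
    obtain ⟨f, hf⟩ := List.sublist_iff_exists_fin_orderEmbedding_get_eq.1 hsub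
    refine ⟨fun i => Fin.cast hwl (f (Fin.cast hll.symm i)), ?_, ?_⟩
    · intro a b hab
      exact f.strictMono hab
    · intro a b hab
      have hget := List.pairwise_iff_get.1 hlt (Fin.cast hll.symm a) (Fin.cast hll.symm b) hab
      rw [hf, hf] at hget
      have hwget : ∀ m : Fin w.length, w.get m = (π (Fin.cast hwl m) : ℕ) := by
        intro m
        show (List.ofFn (fun i => (π i : ℕ))).get (Fin.cast hwl.symm (Fin.cast hwl m))
            = (π (Fin.cast hwl m) : ℕ)
        rw [List.get_ofFn]
        rfl
      rw [hwget, hwget] at hget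
      exact hget
  have hbdd : BddAbove S := by
    refine ⟨n, ?_⟩
    rintro k ⟨s, hs, -⟩
    have := Fintype.card_le_of_injective s hs.injective
    simpa only [Fintype.card_fin] using this
  show sSup S = L
  exact le_antisymm (csSup_le ⟨0, hmem0⟩ hub) (le_csSup hbdd hmem)
end

section
/- For every permutation π ∈ S_n, the length of the longest decreasing subsequence of π equals the number of rows (i.e., the length of the first column) of the Robinson–Schensted shape of π. -/
/-- Length of the longest decreasing subsequence of π. -/
noncomputable def ldsLen (n : ℕ) (π : Equiv.Perm (Fin n)) : ℕ :=
  sSup {k | ∃ s : Fin k → Fin n, StrictMono s ∧ StrictAnti (fun i => π (s i))}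

namespace Aux16

/-! ### Decreasing subsequences and Knuth moves -/

/-- `w` has a strictly decreasing subsequence of length `k`. -/
def hasDec (w : List ℕ) (k : ℕ) : Prop :=
  ∃ l : List ℕ, l.Sublist w ∧ l.IsChain (· > ·) ∧ l.length = k

/-- Elementary Knuth moves (with context). -/
inductive KStep : List ℕ → List ℕ → Prop
  | k1 (u v : List ℕ) (x y z : ℕ) (h1 : x < y) (h2 : y ≤ z) :
      KStep (u ++ y :: x :: z :: v) (u ++ y :: z :: x :: v)
  | k2 (u v : List ℕ) (x y z : ℕ) (h1 : x ≤ y) (h2 : y < z) :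
      KStep (u ++ x :: z :: y :: v) (u ++ z :: x :: y :: v)

def Keq : List ℕ → List ℕ → Prop :=
  Relation.ReflTransGen (fun a b => KStep a b ∨ KStep b a)

theorem Keq.refl (a : List ℕ) : Keq a a := Relation.ReflTransGen.refl

theorem Keq.trans {a b c : List ℕ} (h1 : Keq a b) (h2 : Keq b c) : Keq a c :=
  Relation.ReflTransGen.trans h1 h2

theorem Keq.symm {a b : List ℕ} (h : Keq a b) : Keq b a := by
  induction h with
  | refl => exact Keq.refl _
  | tail _ h ih => exact Keq.trans (Relation.ReflTransGen.single h.symm) ih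

theorem Keq.of_step {a b : List ℕ} (h : KStep a b) : Keq a b :=
  Relation.ReflTransGen.single (Or.inl h)

theorem KStep.append_left {a b : List ℕ} (l : List ℕ) (h : KStep a b) :
    KStep (l ++ a) (l ++ b) := by
  cases h with
  | k1 u v x y z h1 h2 => rw [← List.append_assoc, ← List.append_assoc]; exact .k1 _ _ _ _ _ h1 h2
  | k2 u v x y z h1 h2 => rw [← List.append_assoc, ← List.append_assoc]; exact .k2 _ _ _ _ _ h1 h2

theorem KStep.append_right {a b : List ℕ} (l : List ℕ) (h : KStep a b) :
    KStep (a ++ l) (b ++ l) := by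
  cases h with
  | k1 u v x y z h1 h2 =>
      simpa [List.append_assoc] using KStep.k1 u (v ++ l) x y z h1 h2
  | k2 u v x y z h1 h2 =>
      simpa [List.append_assoc] using KStep.k2 u (v ++ l) x y z h1 h2

theorem Keq.append_left {a b : List ℕ} (l : List ℕ) (h : Keq a b) :
    Keq (l ++ a) (l ++ b) := by
  induction h with
  | refl => exact Keq.refl _
  | tail _ h ih =>
      exact ih.trans (Relation.ReflTransGen.single
        (h.imp (KStep.append_left l) (KStep.append_left l)))

theorem Keq.append_right {a b : List ℕ} (l : List ℕ) (h : Keq a b) :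
    Keq (a ++ l) (b ++ l) := by
  induction h with
  | refl => exact Keq.refl _
  | tail _ h ih =>
      exact ih.trans (Relation.ReflTransGen.single
        (h.imp (KStep.append_right l) (KStep.append_right l)))

/-- Substitution principle for decreasing subsequences across a local change. -/
theorem hasDec_of_local {u v m m' : List ℕ} {k : ℕ}
    (H : ∀ lm : List ℕ, lm.Sublist m → lm.IsChain (· > ·) →
      ∃ lm' : List ℕ, lm'.Sublist m' ∧ lm'.IsChain (· > ·) ∧ lm'.length = lm.length ∧
        (∀ a ∈ lm'.head?, ∃ b ∈ lm.head?, a ≤ b) ∧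
        (∀ a ∈ lm.getLast?, ∃ b ∈ lm'.getLast?, a ≤ b))
    (h : hasDec (u ++ m ++ v) k) : hasDec (u ++ m' ++ v) k := by
  obtain ⟨l, hl, hc, hk⟩ := h
  rw [List.append_assoc, List.sublist_append_iff] at hl
  obtain ⟨l₁, l₂, rfl, hl₁, hl₂⟩ := hl
  rw [List.sublist_append_iff] at hl₂
  obtain ⟨lm, l₃, rfl, hlm, hl₃⟩ := hl₂
  rw [List.isChain_append] at hc
  obtain ⟨hc1, hc2, hc3⟩ := hc
  rw [List.isChain_append] at hc2
  obtain ⟨hcm, hc4, hc5⟩ := hc2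
  obtain ⟨lm', hs', hc', hlen', hhead', hlast'⟩ := H lm hlm hcm
  refine ⟨l₁ ++ (lm' ++ l₃), ?_, ?_, by simp_all⟩
  · rw [List.append_assoc]
    exact (hl₁.append (hs'.append hl₃))
  · rw [List.isChain_append, List.isChain_append]
    refine ⟨hc1, ⟨hc', hc4, ?_⟩, ?_⟩
    · -- between lm' and l₃
      intro a ha y hy
      have hlmne : lm ≠ [] := by
        intro hnil
        rw [hnil] at hlen'
        have h0 : lm' = [] := List.length_eq_zero_iff.1 hlen'
        rw [h0] at ha; simp at ha
      obtain ⟨a', ha'⟩ := Option.ne_none_iff_exists'.1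
        (mt List.getLast?_eq_none_iff.1 hlmne)
      have h1 : a' > y := hc5 a' ha' y hy
      obtain ⟨b, hb, hle⟩ := hlast' a' ha'
      have hba : b = a := Option.mem_unique hb ha
      omega
    · -- between l₁ and lm' ++ l₃
      intro a ha y hy
      rcases lm' with _ | ⟨c', t'⟩
      · have hlmnil : lm = [] := List.length_eq_zero_iff.1 hlen'.symm
        subst hlmnil
        exact hc3 a ha y (by simpa using hy)
      · simp at hy
        obtain ⟨b, hb, hle⟩ := hhead' c' rfl
        have hab : a > b := by
          refine hc3 a ha b ?_
          rcases lm with _ | ⟨c, t⟩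
          · simp at hb
          · simpa using hb
        omega

theorem sublist_triple {lm : List ℕ} {p q r : ℕ} (h : lm.Sublist [p, q, r]) :
    lm = [] ∨ lm = [p] ∨ lm = [q] ∨ lm = [r] ∨
      lm = [p,q] ∨ lm = [p,r] ∨ lm = [q,r] ∨ lm = [p,q,r] := by
  have := List.mem_sublists.2 h
  simp [List.sublists] at this
  tauto

/-- Identity substitution witness. -/
theorem sub_id {m' : List ℕ} (lm : List ℕ) (hs : lm.Sublist m')
    (hc : lm.IsChain (· > ·)) :
    ∃ lm' : List ℕ, lm'.Sublist m' ∧ lm'.IsChain (· > ·) ∧ lm'.length = lm.length ∧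
      (∀ a ∈ lm'.head?, ∃ b ∈ lm.head?, a ≤ b) ∧
      (∀ a ∈ lm.getLast?, ∃ b ∈ lm'.getLast?, a ≤ b) :=
  ⟨lm, hs, hc, rfl, fun a ha => ⟨a, ha, le_refl a⟩, fun a ha => ⟨a, ha, le_refl a⟩⟩

theorem kstep_hasDec {a b : List ℕ} (h : KStep a b) (k : ℕ) :
    hasDec a k ↔ hasDec b k := by
  cases h with
  | k1 u v x y z h1 h2 =>
    have e1 : u ++ y :: x :: z :: v = u ++ [y, x, z] ++ v := by simp
    have e2 : u ++ y :: z :: x :: v = u ++ [y, z, x] ++ v := by simp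
    rw [e1, e2]
    constructor
    · refine hasDec_of_local ?_
      intro lm hs hc
      rcases sublist_triple hs with rfl|rfl|rfl|rfl|rfl|rfl|rfl|rfl
      · exact sub_id _ (by simp) hc
      · exact sub_id _ (by simp) hc
      · exact sub_id _ (by simp) hc
      · exact sub_id _ (by simp) hc
      · exact sub_id _ ((List.Sublist.refl [x]).cons z |>.cons₂ y) hc
      · simp [List.isChain_cons_cons] at hc; omega
      · simp [List.isChain_cons_cons] at hc; omega
      · simp [List.isChain_cons_cons] at hc; omega
    · refine hasDec_of_local ?_
      intro lm hs hc
      rcases sublist_triple hs with rfl|rfl|rfl|rfl|rfl|rfl|rfl|rfl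
      · exact sub_id _ (by simp) hc
      · exact sub_id _ (by simp) hc
      · exact sub_id _ (by simp) hc
      · exact sub_id _ (by simp) hc
      · simp [List.isChain_cons_cons] at hc; omega
      · exact sub_id _ ((List.nil_sublist [z]).cons₂ x |>.cons₂ y) hc
      · -- lm = [z,x] : replace by [y,x]
        refine ⟨[y, x], ?_, ?_, rfl, ?_, ?_⟩
        · exact ((List.nil_sublist [z]).cons₂ x |>.cons₂ y)
        · simp [List.isChain_cons_cons]; omega
        · intro a ha; simp at ha; exact ⟨z, by simp, by omega⟩
        · intro a ha; simp at ha; exact ⟨x, by simp, by omega⟩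
      · simp [List.isChain_cons_cons] at hc; omega
  | k2 u v x y z h1 h2 =>
    have e1 : u ++ x :: z :: y :: v = u ++ [x, z, y] ++ v := by simp
    have e2 : u ++ z :: x :: y :: v = u ++ [z, x, y] ++ v := by simp
    rw [e1, e2]
    constructor
    · refine hasDec_of_local ?_
      intro lm hs hc
      rcases sublist_triple hs with rfl|rfl|rfl|rfl|rfl|rfl|rfl|rfl
      · exact sub_id _ (by simp) hc
      · exact sub_id _ (by simp) hc
      · exact sub_id _ (by simp) hc
      · exact sub_id _ (by simp) hc
      · simp [List.isChain_cons_cons] at hc; omega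
      · simp [List.isChain_cons_cons] at hc; omega
      · exact sub_id _ ((List.Sublist.refl [y]).cons x |>.cons₂ z) hc
      · simp [List.isChain_cons_cons] at hc; omega
    · refine hasDec_of_local ?_
      intro lm hs hc
      rcases sublist_triple hs with rfl|rfl|rfl|rfl|rfl|rfl|rfl|rfl
      · exact sub_id _ (by simp) hc
      · exact sub_id _ (by simp) hc
      · exact sub_id _ (by simp) hc
      · exact sub_id _ (by simp) hc
      · -- lm = [z,x] : replace by [z,y]
        refine ⟨[z, y], ?_, ?_, rfl, ?_, ?_⟩
        · exact ((List.Sublist.refl [y]).cons₂ z |>.cons x)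
        · simp [List.isChain_cons_cons]; omega
        · intro a ha; simp at ha; exact ⟨z, by simp, by omega⟩
        · intro a ha; simp at ha; exact ⟨y, by simp, by omega⟩
      · exact sub_id _ ((List.Sublist.refl [y]).cons₂ z |>.cons x) hc
      · simp [List.isChain_cons_cons] at hc; omega
      · simp [List.isChain_cons_cons] at hc; omega

theorem keq_hasDec {a b : List ℕ} (h : Keq a b) (k : ℕ) :
    hasDec a k ↔ hasDec b k := by
  induction h with
  | refl => rfl
  | tail _ h ih =>
      cases h with
      | inl h => exact ih.trans (kstep_hasDec h k)
      | inr h => exact ih.trans (kstep_hasDec h k).symm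

/-! ### Row insertion facts -/

theorem rowInsert_none {x : ℕ} : ∀ {row row' : List ℕ},
    rowInsert x row = (row', none) → row' = row ++ [x] := by
  intro row
  induction row with
  | nil => intro row' h; simp [rowInsert] at h; simp [h.symm]
  | cons a r ih =>
      intro row' h
      by_cases hxa : x < a
      · simp [rowInsert, hxa] at h
      · rcases hE : rowInsert x r with ⟨r1, o⟩
        simp [rowInsert, hxa, hE] at h
        obtain ⟨h1, h2⟩ := h
        subst h2
        rw [← h1, ih hE]
        simp

theorem rowInsert_none_le {x : ℕ} : ∀ {row row' : List ℕ},
    rowInsert x row = (row', none) → ∀ a ∈ row, a ≤ x := by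
  intro row
  induction row with
  | nil => intro row' h a ha; simp at ha
  | cons a r ih =>
      intro row' h c hc
      by_cases hxa : x < a
      · simp [rowInsert, hxa] at h
      · rcases hE : rowInsert x r with ⟨r1, o⟩
        simp [rowInsert, hxa, hE] at h
        rcases List.mem_cons.1 hc with rfl | hc2
        · omega
        · exact ih (by rw [hE, h.2]) c hc2

theorem sorted_cons_of_head {a b : ℕ} {t : List ℕ}
    (h : List.Pairwise (· ≤ ·) (b :: t)) (hab : a ≤ b) :
    List.Pairwise (· ≤ ·) (a :: b :: t) :=
  h.cons_cons_of_trans hab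

theorem rowInsert_some_spec {x : ℕ} : ∀ {row row' : List ℕ} {b : ℕ},
    List.Pairwise (· ≤ ·) row → rowInsert x row = (row', some b) →
    List.Pairwise (· ≤ ·) row' ∧ x < b ∧ row' ≠ [] ∧ row'.headI = min row.headI x := by
  intro row
  induction row with
  | nil => intro row' b _ h; simp [rowInsert] at h
  | cons a r ih =>
      intro row' b hs h
      by_cases hxa : x < a
      · simp [rowInsert, hxa] at h
        obtain ⟨h1, h2⟩ := h
        subst h2
        rw [← h1]
        refine ⟨?_, hxa, by simp, by simp [min_eq_right (le_of_lt hxa)]⟩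
        refine List.pairwise_cons.2 ⟨?_, List.pairwise_cons.1 hs |>.2⟩
        intro c hc
        exact le_of_lt (lt_of_lt_of_le hxa (List.rel_of_pairwise_cons hs (a' := c) hc))
      · rcases hE : rowInsert x r with ⟨r1, o⟩
        simp [rowInsert, hxa, hE] at h
        obtain ⟨h1, h2⟩ := h
        subst h2
        rcases r with _ | ⟨c, r2⟩
        · simp [rowInsert] at hE
        · have hE' : rowInsert x (c :: r2) = (r1, some b) := hE
          obtain ⟨ihs, ihxb, ihne, ihhead⟩ := ih (List.pairwise_cons.1 hs |>.2) hE'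
          obtain ⟨h0, t0, rfl⟩ := List.exists_cons_of_ne_nil ihne
          have hac : a ≤ c := List.rel_of_pairwise_cons hs (a' := c) (by simp)
          have hah : a ≤ h0 := by
            have : (h0 :: t0).headI = min (c :: r2).headI x := ihhead
            simp at this
            omega
          rw [← h1]
          refine ⟨sorted_cons_of_head ihs hah, ihxb, by simp, ?_⟩
          simp
          omega

/-! ### Tableau invariant -/

structure TInv (T : List (List ℕ)) : Prop where
  sorted : ∀ r ∈ T, List.Pairwise (· ≤ ·) r
  ne : ∀ r ∈ T, r ≠ []
  heads : List.IsChain (· < ·) (T.map List.headI)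

theorem insertTableau_spec : ∀ (T : List (List ℕ)), TInv T → ∀ x : ℕ,
    TInv (insertTableau x T) ∧ ∃ h t, insertTableau x T = h :: t ∧
      ((T = [] → h.headI = x) ∧ ∀ r0 t0, T = r0 :: t0 → h.headI = min r0.headI x) := by
  intro T
  induction T with
  | nil =>
      intro _ x
      refine ⟨⟨?_, ?_, ?_⟩, [x], [], by simp [insertTableau], by simp, by simp⟩
      · intro r hr; simp [insertTableau] at hr; simp [hr]
      · intro r hr; simp [insertTableau] at hr; simp [hr]
      · simp [insertTableau]
  | cons row rest ih =>
      intro hT x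
      have hrowne : row ≠ [] := hT.ne row (by simp)
      have hrows : List.Pairwise (· ≤ ·) row := hT.sorted row (by simp)
      have hheadmem : row.headI ∈ row := by
        rcases row with _ | ⟨rh, rt⟩
        · exact absurd rfl hrowne
        · simp
      rcases hE : rowInsert x row with ⟨row', o⟩
      rcases o with _ | b
      · -- none case: x appended at the end of the first row
        have hrow' : row' = row ++ [x] := rowInsert_none hE
        have hle : ∀ a ∈ row, a ≤ x := rowInsert_none_le hE
        have hres : insertTableau x (row :: rest) = row' :: rest := by
          simp [insertTableau, hE]
        have hhead' : row'.headI = row.headI := by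
          rcases row with _ | ⟨rh, rt⟩
          · exact absurd rfl hrowne
          · simp [hrow']
        rw [hres]
        refine ⟨⟨?_, ?_, ?_⟩, row', rest, rfl, by simp, ?_⟩
        · intro r hr
          rcases List.mem_cons.1 hr with rfl | hr
          · rw [hrow']
            refine List.pairwise_append.2 ⟨hrows, by simp, ?_⟩
            intro a ha c hc
            simp at hc
            subst hc
            exact hle a ha
          · exact hT.sorted r (by simp [hr])
        · intro r hr
          rcases List.mem_cons.1 hr with rfl | hr
          · simp [hrow']
          · exact hT.ne r (by simp [hr])
        · have : (row' :: rest).map List.headI = (row :: rest).map List.headI := by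
            simp [hhead']
          rw [this]
          exact hT.heads
        · intro r0 t0 heq
          obtain ⟨rfl, rfl⟩ : row = r0 ∧ rest = t0 := by
            constructor <;> [exact (List.cons.injEq _ _ _ _ ▸ heq).1;
              exact (List.cons.injEq _ _ _ _ ▸ heq).2]
          rw [hhead']
          have : row.headI ≤ x := hle _ hheadmem
          omega
      · -- some case: b is bumped into the rest
        obtain ⟨hs', hxb, hne', hhead'⟩ := rowInsert_some_spec hrows hE
        have restInv : TInv rest := by
          refine ⟨fun r hr => hT.sorted r (by simp [hr]),
            fun r hr => hT.ne r (by simp [hr]), ?_⟩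
          have := hT.heads
          simp only [List.map_cons] at this
          exact this.tail
        obtain ⟨ihInv, h2, t2, hEq2, hf2a, hf2b⟩ := ih restInv b
        have hres : insertTableau x (row :: rest) = row' :: insertTableau b rest := by
          simp [insertTableau, hE]
        rw [hres]
        refine ⟨⟨?_, ?_, ?_⟩, row', insertTableau b rest, rfl, by simp, ?_⟩
        · intro r hr
          rcases List.mem_cons.1 hr with rfl | hr
          · exact hs'
          · exact ihInv.sorted r hr
        · intro r hr
          rcases List.mem_cons.1 hr with rfl | hr
          · exact hne'
          · exact ihInv.ne r hr
        · rw [hEq2]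
          simp only [List.map_cons]
          refine List.isChain_cons_cons.2 ⟨?_, ?_⟩
          · -- row'.headI < h2.headI
            rw [hhead']
            rcases rest with _ | ⟨r0, t0⟩
            · rw [hf2a rfl]
              omega
            · rw [hf2b r0 t0 rfl]
              have hlt : row.headI < r0.headI := by
                have := hT.heads
                simp only [List.map_cons] at this
                exact (List.isChain_cons_cons.1 this).1
              omega
          · have := ihInv.heads
            rw [hEq2] at this
            simpa using this
        · intro r0 t0 heq
          obtain ⟨rfl, rfl⟩ : row = r0 ∧ rest = t0 := by
            constructor <;> [exact (List.cons.injEq _ _ _ _ ▸ heq).1;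
              exact (List.cons.injEq _ _ _ _ ▸ heq).2]
          exact hhead'

/-! ### Reading words -/

def readT (T : List (List ℕ)) : List ℕ := T.reverse.flatten

theorem readT_cons (row : List ℕ) (rest : List (List ℕ)) :
    readT (row :: rest) = readT rest ++ row := by
  simp [readT]

theorem move_left_keq : ∀ (r : List ℕ) (a x : ℕ), List.Pairwise (· ≤ ·) (a :: r) →
    x < a → Keq (a :: (r ++ [x])) (a :: x :: r) := by
  intro r
  induction r with
  | nil => intro a x _ _; exact Keq.refl _
  | cons c r' ih =>
      intro a x hs hxa
      have hac : a ≤ c := List.rel_of_pairwise_cons hs (a' := c) (by simp)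
      have step1 : Keq (c :: (r' ++ [x])) (c :: x :: r') :=
        ih c x (List.pairwise_cons.1 hs).2 (lt_of_lt_of_le hxa hac)
      have step2 : Keq (a :: c :: (r' ++ [x])) (a :: c :: x :: r') := by
        simpa using step1.append_left [a]
      have step3 : KStep ([] ++ a :: x :: c :: r') ([] ++ a :: c :: x :: r') :=
        KStep.k1 [] r' x a c hxa hac
      exact step2.trans (Keq.of_step step3).symm

/-- Core bump lemma: inserting into a sorted row is a Knuth equivalence. -/
theorem bump_keq : ∀ (row : List ℕ), List.Pairwise (· ≤ ·) row →
    ∀ (x : ℕ) (row' : List ℕ) (b : ℕ), rowInsert x row = (row', some b) →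
    Keq (row ++ [x]) (b :: row') := by
  intro row
  induction row with
  | nil => intro _ x row' b h; simp [rowInsert] at h
  | cons a r ih =>
      intro hs x row' b h
      by_cases hxa : x < a
      · simp [rowInsert, hxa] at h
        obtain ⟨h1, h2⟩ := h
        rw [← h1, ← h2]
        exact move_left_keq r a x hs hxa
      · rcases hE : rowInsert x r with ⟨r1, o⟩
        simp [rowInsert, hxa, hE] at h
        obtain ⟨h1, h2⟩ := h
        subst h2
        rcases r with _ | ⟨c, r2⟩
        · simp [rowInsert] at hE
        · have hE' : rowInsert x (c :: r2) = (r1, some b) := hE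
          have hks : Keq ((c :: r2) ++ [x]) (b :: r1) :=
            ih (List.pairwise_cons.1 hs).2 x r1 b hE'
          have h3 : Keq (a :: ((c :: r2) ++ [x])) (a :: b :: r1) := by
            simpa using hks.append_left [a]
          obtain ⟨hs1, hxb, hne1, hhead1⟩ :=
            rowInsert_some_spec (List.pairwise_cons.1 hs).2 hE'
          obtain ⟨h0, t0, rfl⟩ := List.exists_cons_of_ne_nil hne1
          have hhead0 : h0 = min c x := by simpa using hhead1
          have hac : a ≤ c := List.rel_of_pairwise_cons hs (a' := c) (by simp)
          have hax : a ≤ x := by omega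
          have hah : a ≤ h0 := by omega
          have hhb : h0 < b := by omega
          have step : KStep ([] ++ a :: b :: h0 :: t0) ([] ++ b :: a :: h0 :: t0) :=
            KStep.k2 [] t0 a h0 b hah hhb
          rw [← h1]
          exact h3.trans (by simpa using Keq.of_step step)

theorem insert_keq : ∀ (T : List (List ℕ)), (∀ r ∈ T, List.Pairwise (· ≤ ·) r) →
    ∀ x : ℕ, Keq (readT T ++ [x]) (readT (insertTableau x T)) := by
  intro T
  induction T with
  | nil =>
      intro _ x
      have h1 : readT ([] : List (List ℕ)) ++ [x] = [x] := by simp [readT]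
      have h2 : readT [[x]] = [x] := by simp [readT]
      rw [show insertTableau x [] = [[x]] from by simp [insertTableau], h1, h2]
      exact Keq.refl _
  | cons row rest ih =>
      intro hsor x
      rcases hE : rowInsert x row with ⟨row', o⟩
      rcases o with _ | b
      · have hres : insertTableau x (row :: rest) = row' :: rest := by
          simp [insertTableau, hE]
        rw [hres, readT_cons, readT_cons, rowInsert_none hE, List.append_assoc]
        exact Keq.refl _
      · have hres : insertTableau x (row :: rest) = row' :: insertTableau b rest := by
          simp [insertTableau, hE]
        rw [hres, readT_cons, readT_cons]
        have k1 : Keq (row ++ [x]) (b :: row') :=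
          bump_keq row (hsor row (by simp)) x row' b hE
        have k2 : Keq (readT rest ++ (row ++ [x])) (readT rest ++ ([b] ++ row')) := by
          have := k1.append_left (readT rest)
          simpa using this
        have k3 : Keq (readT rest ++ [b]) (readT (insertTableau b rest)) :=
          ih (fun r hr => hsor r (by simp [hr])) b
        have k4 : Keq ((readT rest ++ [b]) ++ row')
            (readT (insertTableau b rest) ++ row') := k3.append_right row'
        refine Keq.trans ?_ (Keq.trans k2 ?_)
        · rw [List.append_assoc]; exact Keq.refl _
        · rw [← List.append_assoc]
          simpa using k4

/-- The word is Knuth equivalent to the reading word of its RS tableau. -/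
theorem rs_keq (w : List ℕ) : TInv (RSTableau w) ∧ Keq w (readT (RSTableau w)) := by
  induction w using List.reverseRecOn with
  | nil =>
      constructor
      · exact ⟨by simp [RSTableau], by simp [RSTableau], by simp [RSTableau]⟩
      · have : readT (RSTableau []) = [] := by simp [RSTableau, readT]
        rw [this]
        exact Keq.refl _
  | append_singleton w x ih =>
      obtain ⟨hInv, hkeq⟩ := ih
      have hRS : RSTableau (w ++ [x]) = insertTableau x (RSTableau w) := by
        simp [RSTableau, List.foldl_append]
      constructor
      · rw [hRS]; exact (insertTableau_spec _ hInv x).1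
      · rw [hRS]
        have k1 : Keq (w ++ [x]) (readT (RSTableau w) ++ [x]) := hkeq.append_right [x]
        exact k1.trans (insert_keq _ hInv.sorted x)

theorem readT_dec_aux : ∀ (T : List (List ℕ)), TInv T → T ≠ [] →
    ∃ l : List ℕ, l.Sublist (readT T) ∧ l.IsChain (· > ·) ∧ l.length = T.length ∧
      l.getLast? = some T.headI.headI := by
  intro T
  induction T with
  | nil => intro _ h; exact absurd rfl h
  | cons row rest ih =>
      intro hT _
      have hrowhead : [row.headI].Sublist row := by
        obtain ⟨h0, t0, hEq⟩ := List.exists_cons_of_ne_nil (hT.ne row (by simp))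
        rw [hEq]; simp
      rcases rest with _ | ⟨r0, t0⟩
      · refine ⟨[row.headI], ?_, by simp, by simp, by simp⟩
        have : readT [row] = row := by simp [readT]
        rw [this]
        exact hrowhead
      · have restInv : TInv (r0 :: t0) := by
          refine ⟨fun r hr => hT.sorted r (by simp [hr]),
            fun r hr => hT.ne r (by simp [hr]), ?_⟩
          have := hT.heads
          simp only [List.map_cons] at this
          exact this.tail
        obtain ⟨l, hsub, hch, hlen, hlast⟩ := ih restInv (by simp)
        refine ⟨l ++ [row.headI], ?_, ?_, by simp [hlen], by simp⟩
        · rw [readT_cons]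
          exact hsub.append hrowhead
        · rw [List.isChain_append]
          refine ⟨hch, by simp, ?_⟩
          intro a ha y hy
          simp at hy
          subst hy
          rw [hlast] at ha
          have haeq : (r0 :: t0).headI.headI = a := by
            simpa using (Option.mem_unique ha rfl).symm
          have hlt : row.headI < r0.headI := by
            have := hT.heads
            simp only [List.map_cons] at this
            exact (List.isChain_cons_cons.1 this).1
          simp at haeq
          omega

theorem hasDec_readT {T : List (List ℕ)} (h : TInv T) : hasDec (readT T) T.length := by
  rcases T with _ | ⟨row, rest⟩
  · exact ⟨[], by simp [readT], by simp, by simp⟩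
  · obtain ⟨l, h1, h2, h3, _⟩ := readT_dec_aux (row :: rest) h (by simp)
    exact ⟨l, h1, h2, h3⟩

theorem hasDec_readT_le : ∀ (T : List (List ℕ)), (∀ r ∈ T, List.Pairwise (· ≤ ·) r) →
    ∀ {k : ℕ}, hasDec (readT T) k → k ≤ T.length := by
  intro T
  induction T with
  | nil =>
      intro _ k hk
      obtain ⟨l, hs, _, hlen⟩ := hk
      have : readT ([] : List (List ℕ)) = [] := by simp [readT]
      rw [this] at hs
      rw [List.sublist_nil.1 hs] at hlen
      simp at hlen
      omega
  | cons row rest ih =>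
      intro hsor k hk
      obtain ⟨l, hs, hc, hlen⟩ := hk
      rw [readT_cons, List.sublist_append_iff] at hs
      obtain ⟨l₁, l₂, rfl, h₁, h₂⟩ := hs
      rw [List.isChain_append] at hc
      obtain ⟨hc1, hc2, _⟩ := hc
      have hlen2 : l₂.length ≤ 1 := by
        rcases l₂ with _ | ⟨a, _ | ⟨b, t⟩⟩
        · simp
        · simp
        · exfalso
          have hab : a > b := (List.isChain_cons_cons.1 hc2).1
          have hsor2 : List.Pairwise (· ≤ ·) (a :: b :: t) :=
            List.Pairwise.sublist h₂ (hsor row (by simp))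
          have : a ≤ b := List.rel_of_pairwise_cons hsor2 (a' := b) (by simp)
          omega
      have hlen1 : l₁.length ≤ rest.length :=
        ih (fun r hr => hsor r (by simp [hr])) ⟨l₁, h₁, hc1, rfl⟩
      rw [← hlen]
      simp only [List.length_append, List.length_cons]
      omega

end Aux16

namespace Aux16

theorem ofFn_comp_sublist {n k : ℕ} (f : Fin n → ℕ) (g : Fin k → Fin n)
    (hg : StrictMono g) : (List.ofFn (fun i => f (g i))).Sublist (List.ofFn f) := by
  rw [List.sublist_iff_exists_fin_orderEmbedding_get_eq]
  have h1 : (List.ofFn (fun i => f (g i))).length = k := by simp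
  have h2 : n = (List.ofFn f).length := by simp
  refine ⟨OrderEmbedding.ofStrictMono
    (fun i => Fin.cast h2 (g (Fin.cast h1 i))) ?_, ?_⟩
  · intro i j hij
    exact hg hij
  · intro i
    rw [List.get_ofFn, List.get_ofFn]
    rfl

end Aux16

/-- dual Schensted: the longest decreasing subsequence length
of π equals the number of rows (first column length) of the
Robinson–Schensted shape of π. -/
theorem stmt16 (n : ℕ) (π : Equiv.Perm (Fin n)) :
    ldsLen n π = (RSTableau (List.ofFn fun i => (π i : ℕ))).length := by
  classical
  obtain ⟨hInv, hkeq⟩ := Aux16.rs_keq (List.ofFn fun i => (π i : ℕ))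
  have hset : ∀ k, (∃ s : Fin k → Fin n, StrictMono s ∧
      StrictAnti (fun i => π (s i))) ↔
      Aux16.hasDec (List.ofFn fun i => (π i : ℕ)) k := by
    intro k
    constructor
    · rintro ⟨s, hsm, hsa⟩
      refine ⟨List.ofFn (fun i : Fin k => (π (s i) : ℕ)), ?_, ?_, by simp⟩
      · exact Aux16.ofFn_comp_sublist (fun i => (π i : ℕ)) s hsm
      · rw [List.isChain_iff_pairwise, List.pairwise_ofFn]
        intro i j hij
        exact_mod_cast hsa hij
    · rintro ⟨l, hsub, hch, hlen⟩
      rw [List.sublist_iff_exists_fin_orderEmbedding_get_eq] at hsub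
      obtain ⟨f, hf⟩ := hsub
      have hkl : k = l.length := hlen.symm
      have hwn : (List.ofFn fun i => (π i : ℕ)).length = n := by simp
      refine ⟨fun i => Fin.cast hwn (f (Fin.cast hkl i)), ?_, ?_⟩
      · intro i j hij
        exact f.strictMono hij
      · intro i j hij
        have hpw := (List.isChain_iff_pairwise.1 hch)
        rw [List.pairwise_iff_get] at hpw
        have hgt := hpw (Fin.cast hkl i) (Fin.cast hkl j) hij
        have hv : ∀ m : Fin l.length,
            l.get m = (π (Fin.cast hwn (f m)) : ℕ) := by
          intro m
          rw [hf m, List.get_ofFn]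
        rw [hv, hv] at hgt
        exact_mod_cast hgt
  have hSeq : {k | ∃ s : Fin k → Fin n, StrictMono s ∧
      StrictAnti (fun i => π (s i))} =
      {k | Aux16.hasDec (List.ofFn fun i => (π i : ℕ)) k} := by
    ext k; exact hset k
  have htrans : ∀ k, Aux16.hasDec (List.ofFn fun i => (π i : ℕ)) k ↔
      Aux16.hasDec (Aux16.readT (RSTableau (List.ofFn fun i => (π i : ℕ)))) k :=
    fun k => Aux16.keq_hasDec hkeq k
  have hrmem : Aux16.hasDec (List.ofFn fun i => (π i : ℕ))
      (RSTableau (List.ofFn fun i => (π i : ℕ))).length :=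
    (htrans _).2 (Aux16.hasDec_readT hInv)
  have hle : ∀ k, Aux16.hasDec (List.ofFn fun i => (π i : ℕ)) k →
      k ≤ (RSTableau (List.ofFn fun i => (π i : ℕ))).length := by
    intro k hk
    exact Aux16.hasDec_readT_le _ hInv.sorted ((htrans k).1 hk)
  rw [ldsLen, hSeq]
  apply le_antisymm
  · exact csSup_le ⟨_, hrmem⟩ hle
  · exact le_csSup ⟨_, fun k hk => hle k hk⟩ hrmem
end
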